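/- On a non-degenerate triangle T, the divergence-free subspace Z_T of P^{2-}(T) has dimension 6 and is spanned by the six functions w_{T,e_i} := curl(λ_j λ_k (3λ_i − 1)) and w_{T,e_j,e_k} := curl(λ_i^2) for {i,j,k} = {1,2,3}. -/

import Mathlib

open MeasureTheory
open scoped Classical

noncomputable section

/-- The plane. -/
abbrev V2 : Type := ℝ × ℝ

/-- Euclidean dot product on the plane. -/
def dot2 (u v : V2) : ℝ := u.1 * v.1 + u.2 * v.2

/-- 2D cross product. -/
def cross2 (u v : V2) : ℝ := u.1 * v.2 - u.2 * v.1

/-- Euclidean norm on the plane. -/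
def enorm2 (u : V2) : ℝ := Real.sqrt (u.1 ^ 2 + u.2 ^ 2)

/-- `f` is (the restriction of) a polynomial of total degree at most `k`. -/
def IsPolyDeg (k : ℕ) (f : V2 → ℝ) : Prop :=
  ∃ p : MvPolynomial (Fin 2) ℝ, p.totalDegree ≤ k ∧
    ∀ x : V2, f x = MvPolynomial.eval (fun i : Fin 2 => if i = 0 then x.1 else x.2) p

/-- A vector field whose two components are polynomials of degree at most `k`. -/
def IsVPolyDeg (k : ℕ) (v : V2 → V2) : Prop :=
  IsPolyDeg k (fun x => (v x).1) ∧ IsPolyDeg k (fun x => (v x).2)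

/-- partial derivative in the `x` direction -/
def pd1 (f : V2 → ℝ) (x : V2) : ℝ := fderiv ℝ f x (1, 0)

/-- partial derivative in the `y` direction -/
def pd2 (f : V2 → ℝ) (x : V2) : ℝ := fderiv ℝ f x (0, 1)

/-- `curl` of a scalar function: `(∂w/∂y, -∂w/∂x)`. -/
def curl2 (w : V2 → ℝ) : V2 → V2 := fun x => (pd2 w x, - pd1 w x)

/-- divergence of a planar vector field -/
def div2 (v : V2 → V2) (x : V2) : ℝ :=
  pd1 (fun y => (v y).1) x + pd2 (fun y => (v y).2) x

/-- Parametrization of the segment from `p` to `q`. -/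
def seg (p q : V2) (s : ℝ) : V2 := p + s • (q - p)

/-- A non-degenerate triangle, together with its barycentric coordinates `lam i`,
unit outward normals `nrm i` and unit tangents `tang i` of the edges `e i`
(the edge `e i` being opposite the vertex `a i`, joining `a (i+1)` and `a (i+2)`),
oriented so that `nrm i × tang i > 0`. -/
structure Triangle where
  a : Fin 3 → V2
  indep : AffineIndependent ℝ a
  lam : Fin 3 → V2 → ℝ
  lam_affine : ∀ i, ∃ (L : V2 →ₗ[ℝ] ℝ) (c : ℝ), ∀ x, lam i x = L x + c
  lam_apply : ∀ i j, lam i (a j) = if i = j then (1 : ℝ) else 0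
  nrm : Fin 3 → V2
  tang : Fin 3 → V2
  nrm_unit : ∀ i, enorm2 (nrm i) = 1
  tang_unit : ∀ i, enorm2 (tang i) = 1
  tang_parallel : ∀ i, ∃ c : ℝ, a (i + 2) - a (i + 1) = c • tang i
  nrm_orth : ∀ i, dot2 (nrm i) (tang i) = 0
  nrm_outward : ∀ i, dot2 (nrm i) (a i - a (i + 1)) < 0
  orient : ∀ i, 0 < cross2 (nrm i) (tang i)

/-- The (closed) triangle as a subset of the plane. -/
def triSet (T : Triangle) : Set V2 := convexHull ℝ (Set.range T.a)

/-- Parametrization of the edge `e i` of `T` (from `a (i+1)` to `a (i+2)`). -/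
def epara (T : Triangle) (i : Fin 3) (s : ℝ) : V2 := seg (T.a (i + 1)) (T.a (i + 2)) s

/-- Length of edge `e i`. -/
def elen (T : Triangle) (i : Fin 3) : ℝ := enorm2 (T.a (i + 2) - T.a (i + 1))

/-- Area of the triangle. -/
def areaT (T : Triangle) : ℝ := |cross2 (T.a 1 - T.a 0) (T.a 2 - T.a 0)| / 2

/-- The normal component of `v` on each edge of `T` is a polynomial of degree at
most one along that edge. -/
def NormalP1 (T : Triangle) (v : V2 → V2) : Prop :=
  ∀ i : Fin 3, ∃ α β : ℝ, ∀ s ∈ Set.Icc (0 : ℝ) 1,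
    dot2 (v (epara T i s)) (T.nrm i) = α + β * s

/-- Membership in `P^{2-}(T)`: vector-valued quadratic polynomials whose normal
components on the edges are of degree at most one. -/
def memP2m (T : Triangle) (v : V2 → V2) : Prop := IsVPolyDeg 2 v ∧ NormalP1 T v

/-- `w_{T,e_i} := curl(λ_j λ_k (3 λ_i − 1))`, `{i,j,k} = {1,2,3}`. -/
def wE (T : Triangle) (i : Fin 3) : V2 → V2 :=
  curl2 (fun x => T.lam (i + 1) x * T.lam (i + 2) x * (3 * T.lam i x - 1))

/-- `w_{T,e_j,e_k} := curl(λ_i²)`, `{i,j,k} = {1,2,3}` (indexed by the remaining index `i`). -/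
def wEE (T : Triangle) (i : Fin 3) : V2 → V2 :=
  curl2 (fun x => (T.lam i x) ^ 2)


/-! Write `u = λ₀`, `t = λ₁`. Every quadratic vector field is `P • (a₀ - a₂) + Q • (a₁ - a₂)` with
`P = v ⬝ ∇λ₀` and `Q = v ⬝ ∇λ₁` quadratic in `(u, t)`, i.e. it has twelve coefficients. Its
divergence is `∂P/∂u + ∂Q/∂t`, a linear function, so it vanishes on `T` iff it vanishes at the
three vertices; since `n_i` is a nonzero multiple of `∇λ_i`, the normal component on `e_i` is a
multiple of `P`, `Q`, `-(P + Q)` for `i = 0, 1, 2`, and it is affine along the edge iff its `s²`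
coefficient vanishes. Hence `Z_T` is cut out by six independent linear conditions. In the same
coordinates `curl ψ = δ • (∂ψ/∂t • (a₀ - a₂) - ∂ψ/∂u • (a₁ - a₂))` with `δ = ∇λ₀ × ∇λ₁ ≠ 0`, which
gives the coefficients of the six basis functions explicitly; the remaining linear system is solved
by hand. -/

lemma dot2_add (g v w : V2) : dot2 g (v + w) = dot2 g v + dot2 g w := by
  simp only [dot2, Prod.fst_add, Prod.snd_add]; ring

lemma dot2_sub (g v w : V2) : dot2 g (v - w) = dot2 g v - dot2 g w := by
  simp only [dot2, Prod.fst_sub, Prod.snd_sub]; ring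

lemma dot2_smul (g w : V2) (c : ℝ) : dot2 g (c • w) = c * dot2 g w := by
  simp only [dot2, Prod.smul_fst, Prod.smul_snd, smul_eq_mul]; ring

lemma dot2_comm (g w : V2) : dot2 g w = dot2 w g := by
  simp only [dot2]; ring

lemma add_dot2 (g h w : V2) : dot2 (g + h) w = dot2 g w + dot2 h w := by
  simp only [dot2, Prod.fst_add, Prod.snd_add]; ring

lemma smul_dot2 (g w : V2) (c : ℝ) : dot2 (c • g) w = c * dot2 g w := by
  simp only [dot2, Prod.smul_fst, Prod.smul_snd, smul_eq_mul]; ring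

def dotCLM (g : V2) : V2 →L[ℝ] ℝ :=
  g.1 • ContinuousLinearMap.fst ℝ ℝ ℝ + g.2 • ContinuousLinearMap.snd ℝ ℝ ℝ

@[simp] lemma dotCLM_apply (g w : V2) : dotCLM g w = dot2 g w := by
  simp [dotCLM, dot2]

def rot : V2 →ₗ[ℝ] V2 where
  toFun g := (g.2, -g.1)
  map_add' _ _ := by ext <;> simp [add_comm]
  map_smul' _ _ := by ext <;> simp

@[simp] lemma rot_apply (g : V2) : rot g = (g.2, -g.1) := rfl

lemma curl2_eq_rot {ψ : V2 → ℝ} {g x : V2} (h : HasFDerivAt ψ (dotCLM g) x) :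
    curl2 ψ x = rot g := by
  simp [curl2, pd1, pd2, h.fderiv, dot2]

lemma div2_smul_add_smul {f g : V2 → ℝ} {a b e e' x : V2}
    (hf : HasFDerivAt f (dotCLM a) x) (hg : HasFDerivAt g (dotCLM b) x) :
    div2 (fun y => f y • e + g y • e') x = dot2 a e + dot2 b e' := by
  simp only [div2, pd1, pd2, Prod.fst_add, Prod.snd_add, Prod.smul_fst, Prod.smul_snd,
    smul_eq_mul]
  rw [((hf.mul_const e.1).fun_add (hg.mul_const e'.1)).fderiv,
    ((hf.mul_const e.2).fun_add (hg.mul_const e'.2)).fderiv]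
  simp [dot2]
  ring

section Quadratics

open Matrix MvPolynomial

def quadMonomials (u t : ℝ) : Fin 6 → ℝ := ![1, u, t, u ^ 2, u * t, t ^ 2]

def quadForm (p : Fin 6 → ℝ) (u t : ℝ) : ℝ := p ⬝ᵥ quadMonomials u t

lemma quadForm_apply (p : Fin 6 → ℝ) (u t : ℝ) :
    quadForm p u t = p 0 + p 1 * u + p 2 * t + p 3 * u ^ 2 + p 4 * (u * t) + p 5 * t ^ 2 := by
  simp [quadForm, quadMonomials, dotProduct, Fin.sum_univ_succ]
  ring

lemma exists_quadMonomials_eq (a b : ℕ) :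
    ∃ k : Fin 6, a + b ≤ 2 → ∀ u t : ℝ, quadMonomials u t k = u ^ a * t ^ b := by
  by_cases h : a + b ≤ 2
  · obtain ⟨ha, hb⟩ : a ≤ 2 ∧ b ≤ 2 := by omega
    interval_cases a <;> interval_cases b <;> try omega
    exacts [⟨0, fun _ _ _ => by simp [quadMonomials]⟩, ⟨2, fun _ _ _ => by simp [quadMonomials]⟩,
      ⟨5, fun _ _ _ => by simp [quadMonomials]⟩, ⟨1, fun _ _ _ => by simp [quadMonomials]⟩,
      ⟨4, fun _ _ _ => by simp [quadMonomials]⟩, ⟨3, fun _ _ _ => by simp [quadMonomials]⟩]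
  · exact ⟨0, fun h' => absurd h' h⟩

lemma IsPolyDeg.exists_quadForm {f : V2 → ℝ} (h : IsPolyDeg 2 f) :
    ∃ p : Fin 6 → ℝ, ∀ x : V2, f x = quadForm p x.1 x.2 := by
  obtain ⟨P, hdeg, hP⟩ := h
  choose k hk using fun m : Fin 2 →₀ ℕ => exists_quadMonomials_eq (m 0) (m 1)
  refine ⟨∑ m ∈ P.support, P.coeff m • Pi.single (k m) 1, fun x => ?_⟩
  rw [hP, eval_eq', quadForm, sum_dotProduct]
  refine Finset.sum_congr rfl fun m hm => ?_
  have hm2 : m 0 + m 1 ≤ 2 := by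
    have := le_totalDegree hm
    rw [Finsupp.sum_fintype _ _ (fun _ => rfl), Fin.sum_univ_two] at this
    omega
  rw [smul_dotProduct, single_one_dotProduct, hk m hm2, Fin.prod_univ_two]
  simp

lemma exists_quadForm_comp_affine (p : Fin 6 → ℝ) (a b c a' b' c' : ℝ) :
    ∃ q : Fin 6 → ℝ, ∀ u t : ℝ,
      quadForm p (a + b * u + c * t) (a' + b' * u + c' * t) = quadForm q u t := by
  refine ⟨![quadForm p a a',
    p 1 * b + p 2 * b' + 2 * p 3 * a * b + p 4 * (a * b' + a' * b) + 2 * p 5 * a' * b',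
    p 1 * c + p 2 * c' + 2 * p 3 * a * c + p 4 * (a * c' + a' * c) + 2 * p 5 * a' * c',
    p 3 * b ^ 2 + p 4 * b * b' + p 5 * b' ^ 2,
    2 * p 3 * b * c + p 4 * (b * c' + b' * c) + 2 * p 5 * b' * c',
    p 3 * c ^ 2 + p 4 * c * c' + p 5 * c' ^ 2], fun u t => ?_⟩
  simp only [quadForm_apply, cons_val]
  ring

lemma eq_zero_of_quadForm_eq_zero {p : Fin 6 → ℝ} (h : ∀ u t, quadForm p u t = 0) : p = 0 := by
  have e := fun u t => (quadForm_apply p u t).symm.trans (h u t)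
  have h00 := e 0 0; have h10 := e 1 0; have h20 := e (-1) 0
  have h01 := e 0 1; have h02 := e 0 (-1); have h11 := e 1 1
  norm_num at h00 h10 h20 h01 h02 h11
  ext i; fin_cases i <;> simp <;> linarith

def quadPart (p : Fin 6 → ℝ) (u t : ℝ) : ℝ := p 3 * u ^ 2 + p 4 * (u * t) + p 5 * t ^ 2

lemma quadForm_line (p : Fin 6 → ℝ) (u t du dt : ℝ) :
    ∃ a b : ℝ, ∀ s : ℝ,
      quadForm p (u + s * du) (t + s * dt) = a + b * s + quadPart p du dt * s ^ 2 :=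
  ⟨quadForm p u t, p 1 * du + p 2 * dt + 2 * p 3 * u * du + p 4 * (u * dt + t * du)
    + 2 * p 5 * t * dt, fun s => by rw [quadForm_apply, quadForm_apply, quadPart]; ring⟩

lemma exists_affine_on_unitInterval_iff {g : ℝ → ℝ} {a b c : ℝ}
    (hg : ∀ s, g s = a + b * s + c * s ^ 2) :
    (∃ α β : ℝ, ∀ s ∈ Set.Icc (0 : ℝ) 1, g s = α + β * s) ↔ c = 0 := by
  constructor
  · rintro ⟨α, β, h⟩
    have h0 := (hg 0).symm.trans (h 0 (by norm_num))
    have h1 := (hg 1).symm.trans (h 1 (by norm_num))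
    have h2 := (hg (1 / 2)).symm.trans (h (1 / 2) (by norm_num))
    linear_combination 2 * h0 + 2 * h1 - 4 * h2
  · rintro rfl
    exact ⟨a, b, fun s _ => by rw [hg]; ring⟩

lemma isPolyDeg_const (k : ℕ) (c : ℝ) : IsPolyDeg k (fun _ => c) :=
  ⟨C c, by simp, fun _ => by simp⟩

lemma isPolyDeg_fst : IsPolyDeg 1 Prod.fst :=
  ⟨X 0, by simp, fun _ => by simp⟩

lemma isPolyDeg_snd : IsPolyDeg 1 Prod.snd :=
  ⟨X 1, by simp, fun _ => by simp⟩

lemma IsPolyDeg.mono {j k : ℕ} {f : V2 → ℝ} (hf : IsPolyDeg j f) (hjk : j ≤ k) :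
    IsPolyDeg k f :=
  let ⟨p, hp, he⟩ := hf
  ⟨p, hp.trans hjk, he⟩

lemma IsPolyDeg.add {k : ℕ} {f g : V2 → ℝ} (hf : IsPolyDeg k f) (hg : IsPolyDeg k g) :
    IsPolyDeg k (fun x => f x + g x) := by
  obtain ⟨p, hp, hpe⟩ := hf
  obtain ⟨q, hq, hqe⟩ := hg
  exact ⟨p + q, (totalDegree_add p q).trans (max_le hp hq), fun x => by simp [hpe x, hqe x]⟩

lemma IsPolyDeg.mul {j k : ℕ} {f g : V2 → ℝ} (hf : IsPolyDeg j f) (hg : IsPolyDeg k g) :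
    IsPolyDeg (j + k) (fun x => f x * g x) := by
  obtain ⟨p, hp, hpe⟩ := hf
  obtain ⟨q, hq, hqe⟩ := hg
  exact ⟨p * q, (totalDegree_mul p q).trans (add_le_add hp hq), fun x => by simp [hpe x, hqe x]⟩

lemma IsPolyDeg.const_mul {k : ℕ} {f : V2 → ℝ} (c : ℝ) (hf : IsPolyDeg k f) :
    IsPolyDeg k (fun x => c * f x) := by
  simpa using (isPolyDeg_const 0 c).mul hf

lemma IsPolyDeg.quadForm {f g : V2 → ℝ} (hf : IsPolyDeg 1 f) (hg : IsPolyDeg 1 g)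
    (p : Fin 6 → ℝ) : IsPolyDeg 2 (fun x => quadForm p (f x) (g x)) := by
  simp only [quadForm_apply, sq]
  exact (((((isPolyDeg_const 2 _).add ((hf.mono one_le_two).const_mul _)).add
    ((hg.mono one_le_two).const_mul _)).add ((hf.mul hf).const_mul _)).add
    ((hf.mul hg).const_mul _)).add ((hg.mul hg).const_mul _)

end Quadratics

/-- The coefficients, in the sense of `Triangle.quadField` and up to the factor `Triangle.jac`, of
`∑ c i • wE T i + ∑ d i • wEE T i`: they are `(∂ψ/∂t, -∂ψ/∂u)` for its stream function `ψ`
written in `u = lam 0`, `t = lam 1`. -/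
def spanCoeffP (c d : Fin 3 → ℝ) : Fin 6 → ℝ :=
  ![-c 0 - 2 * d 2, 4 * c 0 + 4 * c 1 + 2 * c 2 + 2 * d 2, 2 * c 0 + 2 * d 1 + 2 * d 2,
    -3 * (c 0 + c 1 + c 2), -6 * (c 0 + c 1 + c 2), 0]

def spanCoeffQ (c d : Fin 3 → ℝ) : Fin 6 → ℝ :=
  ![c 1 + 2 * d 2, -2 * c 1 - 2 * d 0 - 2 * d 2, -4 * c 0 - 4 * c 1 - 2 * c 2 - 2 * d 2, 0,
    6 * (c 0 + c 1 + c 2), 3 * (c 0 + c 1 + c 2)]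

def IsZCoeff (p q : Fin 6 → ℝ) : Prop :=
  (p 5 = 0 ∧ q 3 = 0 ∧ p 3 - p 4 + p 5 + q 3 - q 4 + q 5 = 0) ∧
    (p 1 + q 2 = 0 ∧ 2 * p 3 + q 4 = 0 ∧ p 4 + 2 * q 5 = 0)

lemma IsZCoeff.smul {p q : Fin 6 → ℝ} (h : IsZCoeff p q) (a : ℝ) : IsZCoeff (a • p) (a • q) := by
  obtain ⟨⟨h1, h2, h3⟩, h4, h5, h6⟩ := h
  simp only [IsZCoeff, Pi.smul_apply, smul_eq_mul]
  exact ⟨⟨by rw [h1, mul_zero], by rw [h2, mul_zero], by linear_combination a * h3⟩,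
    by linear_combination a * h4, by linear_combination a * h5, by linear_combination a * h6⟩

lemma isZCoeff_spanCoeff (c d : Fin 3 → ℝ) : IsZCoeff (spanCoeffP c d) (spanCoeffQ c d) := by
  simp only [IsZCoeff, spanCoeffP, spanCoeffQ, Matrix.cons_val]
  refine ⟨⟨trivial, trivial, ?_⟩, ?_, ?_, ?_⟩ <;> ring

lemma exists_spanCoeff {p q : Fin 6 → ℝ} (h : IsZCoeff p q) :
    ∃ c d : Fin 3 → ℝ, spanCoeffP c d = p ∧ spanCoeffQ c d = q := by
  obtain ⟨⟨h1, h2, h3⟩, h4, h5, h6⟩ := h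
  set e := -(6 * p 0 + 3 * p 1 + 2 * p 3 - 6 * q 0) / 18 with he
  refine ⟨![-p 0 - 2 * e, q 0 - 2 * e, -p 3 / 3 + p 0 - q 0 + 4 * e],
    ![-q 1 / 2 - q 0 + e, p 2 / 2 + p 0 + e, e], ?_, ?_⟩ <;>
  · ext k
    fin_cases k <;> simp [spanCoeffP, spanCoeffQ] <;> linarith

lemma eq_zero_of_spanCoeff_eq_zero {c d : Fin 3 → ℝ} (hP : spanCoeffP c d = 0)
    (hQ : spanCoeffQ c d = 0) : c = 0 ∧ d = 0 := by
  have hP' (k : Fin 6) := congrFun hP k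
  have hQ' (k : Fin 6) := congrFun hQ k
  simp [spanCoeffP, spanCoeffQ, Fin.forall_fin_succ] at hP' hQ'
  constructor <;> ext i <;> fin_cases i <;> simp <;> linarith

lemma cross2_eq_zero_of_dot2_eq_zero {n g e : V2} (hn : dot2 n e = 0) (hg : dot2 g e = 0)
    (he : e ≠ 0) : cross2 n g = 0 := by
  simp only [dot2, cross2] at *
  have h1 : (n.1 * g.2 - n.2 * g.1) * e.1 = 0 := by linear_combination g.2 * hn - n.2 * hg
  have h2 : (n.1 * g.2 - n.2 * g.1) * e.2 = 0 := by linear_combination n.1 * hg - g.1 * hn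
  by_contra hc
  exact he (Prod.ext ((mul_eq_zero.1 h1).resolve_left hc) ((mul_eq_zero.1 h2).resolve_left hc))

lemma eq_dot2_smul_of_cross2_eq_zero {n g w : V2} (h : cross2 n g = 0) (hw : dot2 g w = 1) :
    n = dot2 n w • g := by
  simp only [dot2, cross2] at *
  ext <;> simp only [Prod.smul_fst, Prod.smul_snd, smul_eq_mul]
  · linear_combination (-n.1) * hw + w.2 * h
  · linear_combination (-n.2) * hw - w.1 * h

namespace Triangle

variable (T : Triangle)

def grad (i : Fin 3) : V2 := (T.lam i (1, 0) - T.lam i 0, T.lam i (0, 1) - T.lam i 0)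

lemma lam_add (i : Fin 3) (x w : V2) : T.lam i (x + w) = T.lam i x + dot2 (T.grad i) w := by
  obtain ⟨L, c, hL⟩ := T.lam_affine i
  have hw : w = w.1 • ((1 : ℝ), (0 : ℝ)) + w.2 • ((0 : ℝ), (1 : ℝ)) := by ext <;> simp
  simp only [grad, dot2, hL, map_add, map_zero]
  rw [hw]
  simp only [map_add, map_smul, smul_eq_mul, Prod.fst_add, Prod.snd_add, Prod.smul_fst,
    Prod.smul_snd]
  ring

lemma lam_sub_lam (i : Fin 3) (x y : V2) : T.lam i x - T.lam i y = dot2 (T.grad i) (x - y) := by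
  have h := T.lam_add i y (x - y)
  rw [add_sub_cancel] at h
  linarith

lemma hasFDerivAt_lam (i : Fin 3) (x : V2) : HasFDerivAt (T.lam i) (dotCLM (T.grad i)) x := by
  have : T.lam i = fun y => T.lam i 0 + dotCLM (T.grad i) y := by
    funext y; rw [dotCLM_apply, ← T.lam_add, zero_add]
  rw [this]
  exact (dotCLM (T.grad i)).hasFDerivAt.const_add _

@[simp] lemma lam_self (i : Fin 3) : T.lam i (T.a i) = 1 := by simp [T.lam_apply]

@[simp] lemma lam_of_ne {i j : Fin 3} (h : i ≠ j) : T.lam i (T.a j) = 0 := by simp [T.lam_apply, h]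

lemma fin_three_ne : ∀ j : Fin 3, j ≠ j + 1 ∧ j ≠ j + 2 ∧ j + 1 ≠ j + 2 := by decide

def side0 : V2 := T.a 0 - T.a 2

def side1 : V2 := T.a 1 - T.a 2

lemma dot2_grad_side0 (i : Fin 3) : dot2 (T.grad i) T.side0 = ![1, 0, -1] i := by
  rw [side0, ← lam_sub_lam]; fin_cases i <;> simp

lemma dot2_grad_side1 (i : Fin 3) : dot2 (T.grad i) T.side1 = ![0, 1, -1] i := by
  rw [side1, ← lam_sub_lam]; fin_cases i <;> simp

def jac : ℝ := cross2 (T.grad 0) (T.grad 1)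

lemma jac_mul_cross2_sides : T.jac * cross2 T.side0 T.side1 = 1 := by
  have h00 := T.dot2_grad_side0 0
  have h01 := T.dot2_grad_side1 0
  have h10 := T.dot2_grad_side0 1
  have h11 := T.dot2_grad_side1 1
  simp only [dot2, jac, cross2] at *
  norm_num at h00 h01 h10 h11
  linear_combination ((T.grad 1).1 * T.side1.1 + (T.grad 1).2 * T.side1.2) * h00 + h11
    - ((T.grad 1).1 * T.side0.1 + (T.grad 1).2 * T.side0.2) * h01

lemma jac_ne_zero : T.jac ≠ 0 := left_ne_zero_of_mul_eq_one T.jac_mul_cross2_sides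

lemma eq_zero_of_dot2_grad_eq_zero {w : V2} (h0 : dot2 (T.grad 0) w = 0)
    (h1 : dot2 (T.grad 1) w = 0) : w = 0 := by
  have hj := T.jac_ne_zero
  simp only [dot2, jac, cross2] at h0 h1 hj
  have e1 : w.1 * ((T.grad 0).1 * (T.grad 1).2 - (T.grad 0).2 * (T.grad 1).1) = 0 := by
    linear_combination (T.grad 1).2 * h0 - (T.grad 0).2 * h1
  have e2 : w.2 * ((T.grad 0).1 * (T.grad 1).2 - (T.grad 0).2 * (T.grad 1).1) = 0 := by
    linear_combination (T.grad 0).1 * h1 - (T.grad 1).1 * h0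
  exact Prod.ext ((mul_eq_zero.1 e1).resolve_right hj) ((mul_eq_zero.1 e2).resolve_right hj)

lemma eq_smul_side0_add_smul_side1 (w : V2) :
    w = dot2 (T.grad 0) w • T.side0 + dot2 (T.grad 1) w • T.side1 := by
  rw [← sub_eq_zero]
  apply T.eq_zero_of_dot2_grad_eq_zero <;>
    simp [dot2_sub, dot2_add, dot2_smul, dot2_grad_side0, dot2_grad_side1]

lemma lam_two (x : V2) : T.lam 2 x = 1 - T.lam 0 x - T.lam 1 x := by
  have h := congrArg (dot2 (T.grad 2)) (T.eq_smul_side0_add_smul_side1 (x - T.a 2))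
  simp only [dot2_add, dot2_smul, dot2_grad_side0, dot2_grad_side1, ← lam_sub_lam] at h
  simp at h
  linarith

lemma grad_two : T.grad 2 = -T.grad 0 - T.grad 1 := by
  ext <;> simp [grad, T.lam_two] <;> ring

lemma rot_grad_zero : rot (T.grad 0) = -T.jac • T.side1 := by
  rw [T.eq_smul_side0_add_smul_side1 (rot (T.grad 0))]
  simp only [rot_apply, dot2, jac, cross2]
  module

lemma rot_grad_one : rot (T.grad 1) = T.jac • T.side0 := by
  rw [T.eq_smul_side0_add_smul_side1 (rot (T.grad 1))]
  simp only [rot_apply, dot2, jac, cross2]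
  module

lemma rot_grad_two : rot (T.grad 2) = T.jac • (T.side1 - T.side0) := by
  rw [grad_two, map_sub, map_neg, rot_grad_zero, rot_grad_one]
  module

lemma nrm_eq_smul_grad (j : Fin 3) :
    T.nrm j = dot2 (T.nrm j) (T.a j - T.a (j + 1)) • T.grad j := by
  obtain ⟨h01, h02, h12⟩ := fin_three_ne j
  have hn : dot2 (T.nrm j) (T.a (j + 2) - T.a (j + 1)) = 0 := by
    obtain ⟨c, hc⟩ := T.tang_parallel j
    rw [hc, dot2_smul, T.nrm_orth, mul_zero]
  have hg : dot2 (T.grad j) (T.a (j + 2) - T.a (j + 1)) = 0 := by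
    rw [← lam_sub_lam, T.lam_of_ne h01, T.lam_of_ne h02, sub_zero]
  have he : T.a (j + 2) - T.a (j + 1) ≠ 0 := fun he => by
    have := T.lam_sub_lam (j + 1) (T.a (j + 2)) (T.a (j + 1))
    rw [he, T.lam_of_ne h12, lam_self] at this
    simp [dot2] at this
  refine eq_dot2_smul_of_cross2_eq_zero (cross2_eq_zero_of_dot2_eq_zero hn hg he) ?_
  rw [← lam_sub_lam, lam_self, T.lam_of_ne h01, sub_zero]


lemma isPolyDeg_lam (i : Fin 3) : IsPolyDeg 1 (T.lam i) := by
  have : T.lam i = fun x => T.lam i 0 + ((T.grad i).1 * x.1 + (T.grad i).2 * x.2) :=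
    funext fun x => by rw [← dot2, ← T.lam_add, zero_add]
  rw [this]
  exact (isPolyDeg_const 1 _).add ((isPolyDeg_fst.const_mul _).add (isPolyDeg_snd.const_mul _))

lemma lam_zero_add_smul_side0_add_smul_side1 (u t : ℝ) :
    T.lam 0 (T.a 2 + (u • T.side0 + t • T.side1)) = u := by
  simp [lam_add, dot2_add, dot2_smul, dot2_grad_side0, dot2_grad_side1]

lemma lam_one_add_smul_side0_add_smul_side1 (u t : ℝ) :
    T.lam 1 (T.a 2 + (u • T.side0 + t • T.side1)) = t := by
  simp [lam_add, dot2_add, dot2_smul, dot2_grad_side0, dot2_grad_side1]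

lemma eq_add_lam_smul_side0_add_lam_smul_side1 (x : V2) :
    x = T.a 2 + (T.lam 0 x • T.side0 + T.lam 1 x • T.side1) := by
  have h := T.eq_smul_side0_add_smul_side1 (x - T.a 2)
  simp only [← lam_sub_lam, lam_of_ne, ne_eq, Fin.reduceEq, not_false_eq_true, sub_zero] at h
  rw [← h, add_sub_cancel]

lemma exists_quadForm_lam {f : V2 → ℝ} (h : IsPolyDeg 2 f) :
    ∃ p : Fin 6 → ℝ, ∀ x, f x = quadForm p (T.lam 0 x) (T.lam 1 x) := by
  obtain ⟨p, hp⟩ := h.exists_quadForm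
  obtain ⟨q, hq⟩ := exists_quadForm_comp_affine p (T.a 2).1 T.side0.1 T.side1.1
    (T.a 2).2 T.side0.2 T.side1.2
  refine ⟨q, fun x => ?_⟩
  have hx := T.eq_add_lam_smul_side0_add_lam_smul_side1 x
  have hx1 := congrArg Prod.fst hx
  have hx2 := congrArg Prod.snd hx
  simp only [Prod.fst_add, Prod.snd_add, Prod.smul_fst, Prod.smul_snd, smul_eq_mul] at hx1 hx2
  rw [hp, hx1, hx2, ← hq]
  ring_nf

def quadField (p q : Fin 6 → ℝ) (x : V2) : V2 :=
  quadForm p (T.lam 0 x) (T.lam 1 x) • T.side0 + quadForm q (T.lam 0 x) (T.lam 1 x) • T.side1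

lemma exists_quadField {v : V2 → V2} (hv : IsVPolyDeg 2 v) :
    ∃ p q : Fin 6 → ℝ, ∀ x, v x = T.quadField p q x := by
  have hdot (g : V2) : IsPolyDeg 2 (fun x => dot2 g (v x)) :=
    (hv.1.const_mul g.1).add (hv.2.const_mul g.2)
  obtain ⟨p, hp⟩ := T.exists_quadForm_lam (hdot (T.grad 0))
  obtain ⟨q, hq⟩ := T.exists_quadForm_lam (hdot (T.grad 1))
  exact ⟨p, q, fun x => by rw [quadField, ← hp, ← hq, ← T.eq_smul_side0_add_smul_side1]⟩

lemma isVPolyDeg_quadField (p q : Fin 6 → ℝ) : IsVPolyDeg 2 (T.quadField p q) := by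
  have hP := (T.isPolyDeg_lam 0).quadForm (T.isPolyDeg_lam 1) p
  have hQ := (T.isPolyDeg_lam 0).quadForm (T.isPolyDeg_lam 1) q
  constructor
  · simpa [quadField, mul_comm] using (hP.const_mul T.side0.1).add (hQ.const_mul T.side1.1)
  · simpa [quadField, mul_comm] using (hP.const_mul T.side0.2).add (hQ.const_mul T.side1.2)

lemma dot2_grad_quadField (p q : Fin 6 → ℝ) (j : Fin 3) (x : V2) :
    dot2 (T.grad j) (T.quadField p q x)
      = quadForm (![p, q, -(p + q)] j) (T.lam 0 x) (T.lam 1 x) := by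
  fin_cases j <;>
    simp [quadField, dot2_add, dot2_smul, dot2_grad_side0, dot2_grad_side1, quadForm,
      add_dotProduct]
  ring

lemma quadField_eq_zero {p q : Fin 6 → ℝ} (h : ∀ x, T.quadField p q x = 0) : p = 0 ∧ q = 0 := by
  have hz (j : Fin 3) (u t : ℝ) : quadForm (![p, q, -(p + q)] j) u t = 0 := by
    have := T.dot2_grad_quadField p q j (T.a 2 + (u • T.side0 + t • T.side1))
    rwa [h, lam_zero_add_smul_side0_add_smul_side1, lam_one_add_smul_side0_add_smul_side1,
      dot2_comm, dot2, Prod.fst_zero, Prod.snd_zero, zero_mul, zero_mul, add_zero, eq_comm]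
      at this
  exact ⟨eq_zero_of_quadForm_eq_zero (hz 0), eq_zero_of_quadForm_eq_zero (hz 1)⟩


lemma hasFDerivAt_quadForm_lam (p : Fin 6 → ℝ) (x : V2) :
    HasFDerivAt (fun y => quadForm p (T.lam 0 y) (T.lam 1 y))
      (dotCLM ((p 1 + 2 * p 3 * T.lam 0 x + p 4 * T.lam 1 x) • T.grad 0
        + (p 2 + p 4 * T.lam 0 x + 2 * p 5 * T.lam 1 x) • T.grad 1)) x := by
  have h0 := T.hasFDerivAt_lam 0 x
  have h1 := T.hasFDerivAt_lam 1 x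
  simp only [quadForm_apply]
  refine (((((((hasFDerivAt_const (p 0) x).add (h0.const_mul (p 1))).add
    (h1.const_mul (p 2))).add ((h0.pow 2).const_mul (p 3))).add
    ((h0.mul h1).const_mul (p 4))).add ((h1.pow 2).const_mul (p 5)))).congr_fderiv ?_
  ext <;> simp [add_dot2, smul_dot2] <;> ring

lemma div2_quadField (p q : Fin 6 → ℝ) (x : V2) :
    div2 (T.quadField p q) x
      = (p 1 + q 2) + (2 * p 3 + q 4) * T.lam 0 x + (p 4 + 2 * q 5) * T.lam 1 x := by
  unfold quadField
  rw [div2_smul_add_smul (T.hasFDerivAt_quadForm_lam p x)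
    (T.hasFDerivAt_quadForm_lam q x)]
  simp [add_dot2, smul_dot2, dot2_grad_side0, dot2_grad_side1]
  ring

lemma divFree_quadField_iff (p q : Fin 6 → ℝ) :
    (∀ x ∈ triSet T, div2 (T.quadField p q) x = 0)
      ↔ p 1 + q 2 = 0 ∧ 2 * p 3 + q 4 = 0 ∧ p 4 + 2 * q 5 = 0 := by
  refine ⟨fun h => ?_, fun ⟨h1, h2, h3⟩ x _ => ?_⟩
  · have hv (j : Fin 3) := h (T.a j) (subset_convexHull ℝ _ ⟨j, rfl⟩)
    have hv0 := hv 0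
    have hv1 := hv 1
    have hv2 := hv 2
    simp only [div2_quadField, lam_self, ne_eq, Fin.reduceEq, not_false_eq_true, lam_of_ne]
      at hv0 hv1 hv2
    exact ⟨by linarith, by linarith, by linarith⟩
  · rw [div2_quadField]
    linear_combination h1 + T.lam 0 x * h2 + T.lam 1 x * h3

lemma lam_epara (k j : Fin 3) (s : ℝ) :
    T.lam k (epara T j s)
      = T.lam k (T.a (j + 1)) + s * (T.lam k (T.a (j + 2)) - T.lam k (T.a (j + 1))) := by
  rw [epara, seg, lam_add, dot2_smul, lam_sub_lam]

lemma exists_affine_normal_quadField_iff (p q : Fin 6 → ℝ) (j : Fin 3) :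
    (∃ α β : ℝ, ∀ s ∈ Set.Icc (0 : ℝ) 1,
        dot2 (T.quadField p q (epara T j s)) (T.nrm j) = α + β * s) ↔
      quadPart (![p, q, -(p + q)] j) (T.lam 0 (T.a (j + 2)) - T.lam 0 (T.a (j + 1)))
        (T.lam 1 (T.a (j + 2)) - T.lam 1 (T.a (j + 1))) = 0 := by
  obtain ⟨A, B, hAB⟩ := quadForm_line (![p, q, -(p + q)] j) (T.lam 0 (T.a (j + 1)))
    (T.lam 1 (T.a (j + 1))) (T.lam 0 (T.a (j + 2)) - T.lam 0 (T.a (j + 1)))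
    (T.lam 1 (T.a (j + 2)) - T.lam 1 (T.a (j + 1)))
  set C := quadPart (![p, q, -(p + q)] j) (T.lam 0 (T.a (j + 2)) - T.lam 0 (T.a (j + 1)))
    (T.lam 1 (T.a (j + 2)) - T.lam 1 (T.a (j + 1)))
  have hμ : dot2 (T.nrm j) (T.a j - T.a (j + 1)) ≠ 0 := (T.nrm_outward j).ne
  rw [exists_affine_on_unitInterval_iff (a := _ * A) (b := _ * B) (c := _ * C) fun s => by
    rw [dot2_comm, T.nrm_eq_smul_grad, smul_dot2, dot2_grad_quadField, lam_epara, lam_epara,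
      hAB]
    ring]
  exact mul_eq_zero_iff_left hμ

lemma normalP1_quadField_iff (p q : Fin 6 → ℝ) :
    NormalP1 T (T.quadField p q)
      ↔ p 5 = 0 ∧ q 3 = 0 ∧ p 3 - p 4 + p 5 + q 3 - q 4 + q 5 = 0 := by
  simp only [NormalP1, exists_affine_normal_quadField_iff, Fin.forall_fin_succ,
    IsEmpty.forall_iff]
  simp [quadPart]
  intro _ _
  constructor <;> intro h <;> linear_combination -h


lemma wE_apply (i : Fin 3) (x : V2) :
    wE T i x = (T.lam (i + 2) x * (3 * T.lam i x - 1)) • rot (T.grad (i + 1))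
      + (T.lam (i + 1) x * (3 * T.lam i x - 1)) • rot (T.grad (i + 2))
      + (3 * (T.lam (i + 1) x * T.lam (i + 2) x)) • rot (T.grad i) := by
  have h := T.hasFDerivAt_lam
  have hψ : HasFDerivAt (fun y => T.lam (i + 1) y * T.lam (i + 2) y * (3 * T.lam i y - 1))
      (dotCLM ((T.lam (i + 2) x * (3 * T.lam i x - 1)) • T.grad (i + 1)
        + (T.lam (i + 1) x * (3 * T.lam i x - 1)) • T.grad (i + 2)
        + (3 * (T.lam (i + 1) x * T.lam (i + 2) x)) • T.grad i)) x :=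
    (((h (i + 1) x).mul (h (i + 2) x)).mul (((h i x).const_mul 3).sub_const 1)).congr_fderiv
      (by ext <;> simp [add_dot2, smul_dot2] <;> ring)
  rw [wE, curl2_eq_rot hψ, map_add, map_add, map_smul, map_smul, map_smul]

lemma wEE_apply (i : Fin 3) (x : V2) : wEE T i x = (2 * T.lam i x) • rot (T.grad i) := by
  have h := T.hasFDerivAt_lam i x
  have hψ : HasFDerivAt (fun y => T.lam i y ^ 2) (dotCLM ((2 * T.lam i x) • T.grad i)) x :=
    (h.pow 2).congr_fderiv (by ext <;> simp [smul_dot2])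
  rw [wEE, curl2_eq_rot hψ, map_smul]

lemma sum_wE_add_sum_wEE (c d : Fin 3 → ℝ) (x : V2) :
    ∑ i, c i • wE T i x + ∑ i, d i • wEE T i x
      = T.quadField (T.jac • spanCoeffP c d) (T.jac • spanCoeffQ c d) x := by
  simp only [Fin.sum_univ_three, wE_apply, wEE_apply, Fin.reduceAdd, rot_grad_zero,
    rot_grad_one, rot_grad_two, lam_two, quadField, quadForm_apply, spanCoeffP,
    spanCoeffQ, Pi.smul_apply, smul_eq_mul, Matrix.cons_val]
  module

lemma mem_Z_quadField_iff (p q : Fin 6 → ℝ) :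
    (memP2m T (T.quadField p q) ∧ ∀ x ∈ triSet T, div2 (T.quadField p q) x = 0)
      ↔ IsZCoeff p q := by
  rw [memP2m, T.normalP1_quadField_iff, T.divFree_quadField_iff, IsZCoeff,
    and_iff_right (T.isVPolyDeg_quadField p q)]

end Triangle

/-- the divergence-free subspace `Z_T` of `P^{2-}(T)` is spanned by the six
functions `w_{T,e_i}` and `w_{T,e_j,e_k}`, and these six functions are linearly
independent, so `dim Z_T = 6`. -/
theorem stmt4 (T : Triangle) :
    (∀ v, (memP2m T v ∧ ∀ x ∈ triSet T, div2 v x = 0) ↔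
      ∃ c d : Fin 3 → ℝ,
        ∀ x, v x = ∑ i : Fin 3, c i • wE T i x + ∑ i : Fin 3, d i • wEE T i x) ∧
    (∀ c d : Fin 3 → ℝ,
      (∀ x, ∑ i : Fin 3, c i • wE T i x + ∑ i : Fin 3, d i • wEE T i x = 0) →
      c = 0 ∧ d = 0) := by
  refine ⟨fun v => ⟨fun hv => ?_, ?_⟩, fun c d h => ?_⟩
  · obtain ⟨p, q, hpq⟩ := T.exists_quadField hv.1.1
    rw [funext hpq, T.mem_Z_quadField_iff] at hv
    obtain ⟨c, d, hc, hd⟩ := exists_spanCoeff (hv.smul T.jac⁻¹)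
    refine ⟨c, d, fun x => ?_⟩
    rw [T.sum_wE_add_sum_wEE, hc, hd, smul_inv_smul₀ T.jac_ne_zero,
      smul_inv_smul₀ T.jac_ne_zero, hpq]
  · rintro ⟨c, d, hv⟩
    rw [funext fun x => (hv x).trans (T.sum_wE_add_sum_wEE c d x), T.mem_Z_quadField_iff]
    exact (isZCoeff_spanCoeff c d).smul T.jac
  · obtain ⟨hP, hQ⟩ := T.quadField_eq_zero fun x => (T.sum_wE_add_sum_wEE c d x).symm.trans (h x)
    exact eq_zero_of_spanCoeff_eq_zero ((smul_eq_zero.1 hP).resolve_left T.jac_ne_zero)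
      ((smul_eq_zero.1 hQ).resolve_left T.jac_ne_zero)
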